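/- Let (μₙ) be positive with μₙ → 0 and √n·μₙ → ∞, and let (θₙ) satisfy θₙ/μₙ → ζ with 1 ≤ ζ < ∞. Define w⁽²⁾ₙ(x) = √n·μₙ·{(-θₙ/μₙ + x) + √((θₙ/μₙ + x)² + 4)}/2. Then w⁽²⁾ₙ(x) → ∞ for x > -1/ζ and w⁽²⁾ₙ(x) → -∞ for x < -1/ζ. Consequently the cdf G_n(x) of μₙ⁻¹(θ̂_A - θₙ) converges weakly to pointmass at -1/ζ. -/

import Mathlib

open ProbabilityTheory Filter

/-- The adaptive LASSO estimator `θ̂ = ȳ (1 - μ²/ȳ²)₊`. -/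
noncomputable def alasso (μ ybar : ℝ) : ℝ := ybar * max (1 - μ ^ 2 / ybar ^ 2) 0

/-- The finite-sample cdf of `μ⁻¹(θ̂_A - θ)` under `ȳ ~ N(θ, 1/n)`. -/
noncomputable def Gcdf (n : ℕ) (θ μ x : ℝ) : ℝ :=
  (gaussianReal θ ((n : NNReal))⁻¹
    {y : ℝ | μ⁻¹ * (alasso μ y - θ) ≤ x}).toReal

section Aux

open MeasureTheory

lemma ray_pos {μ t : ℝ} (hμ : 0 < μ) (ht : 0 < t) :
    {y : ℝ | alasso μ y ≤ t} = Set.Iic ((t + Real.sqrt (t^2 + 4*μ^2))/2) := by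
  set s := Real.sqrt (t^2 + 4*μ^2) with hs
  have hs2 : s^2 = t^2 + 4*μ^2 := Real.sq_sqrt (by positivity)
  have hs0 : 0 ≤ s := Real.sqrt_nonneg _
  set c := (t + s)/2 with hc
  have hst : t < s := by nlinarith
  have hct : t < c := by simp only [hc]; linarith
  have hc0 : 0 < c := lt_trans ht hct
  have hcq : c^2 = t*c + μ^2 := by simp only [hc]; nlinarith
  have hcμ : μ < c := by nlinarith
  ext y
  simp only [Set.mem_setOf_eq, Set.mem_Iic]
  constructor
  · intro h
    by_contra hy
    push_neg at hy
    have hy0 : 0 < y := lt_trans hc0 hy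
    have hyμ : μ < y := lt_trans hcμ hy
    have hav : alasso μ y = y - μ^2/y := by
      unfold alasso
      have h1 : μ^2/y^2 < 1 := by
        rw [div_lt_one (by positivity)]; nlinarith
      rw [max_eq_left (by linarith)]
      field_simp; try ring
    rw [hav] at h
    have : (y - μ^2/y) * y ≤ t * y := by
      exact mul_le_mul_of_nonneg_right h hy0.le
    rw [sub_mul, div_mul_cancel₀ _ (ne_of_gt hy0)] at this
    nlinarith
  · intro h
    rcases le_or_gt y 0 with hy | hy
    · have : alasso μ y ≤ 0 := mul_nonpos_of_nonpos_of_nonneg hy (le_max_right _ _)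
      linarith
    rcases le_or_gt y μ with hyμ | hyμ
    · have : max (1 - μ^2/y^2) 0 = 0 := by
        apply max_eq_right
        have : 1 ≤ μ^2/y^2 := by
          rw [le_div_iff₀ (by positivity)]; nlinarith
        linarith
      unfold alasso
      rw [this, mul_zero]; exact ht.le
    · have hav : alasso μ y = y - μ^2/y := by
        unfold alasso
        have h1 : μ^2/y^2 < 1 := by
          rw [div_lt_one (by positivity)]; nlinarith
        rw [max_eq_left (by linarith)]
        field_simp; try ring
      rw [hav]
      have hy0 : 0 < y := lt_trans hμ hyμ
      have heq : y - μ^2/y = (y*y - μ^2)/y := by field_simp; try ring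
      rw [heq, div_le_iff₀ hy0]
      nlinarith [mul_nonneg (sub_nonneg.mpr h) (by positivity : (0:ℝ) ≤ c*y + μ^2)]

lemma ray_neg {μ t : ℝ} (hμ : 0 < μ) (ht : t < 0) :
    {y : ℝ | alasso μ y ≤ t} = Set.Iic ((t - Real.sqrt (t^2 + 4*μ^2))/2) := by
  set s := Real.sqrt (t^2 + 4*μ^2) with hs
  have hs2 : s^2 = t^2 + 4*μ^2 := Real.sq_sqrt (by positivity)
  have hs0 : 0 ≤ s := Real.sqrt_nonneg _
  set c := (t - s)/2 with hc
  have hst : -t < s := by nlinarith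
  have hct : c < t := by simp only [hc]; nlinarith
  have hc0 : c < 0 := lt_trans hct ht
  have hcq : c^2 = t*c + μ^2 := by simp only [hc]; nlinarith
  have hcμ : c < -μ := by nlinarith
  ext y
  simp only [Set.mem_setOf_eq, Set.mem_Iic]
  constructor
  · intro h
    by_contra hy
    push_neg at hy
    rcases le_or_gt 0 y with hy0 | hy0
    · have : 0 ≤ alasso μ y := mul_nonneg hy0 (le_max_right _ _)
      linarith
    have hy' : y ≠ 0 := ne_of_lt hy0
    rcases le_or_gt (-μ) y with hyμ | hyμ
    · have : max (1 - μ^2/y^2) 0 = 0 := by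
        apply max_eq_right
        have : 1 ≤ μ^2/y^2 := by
          rw [le_div_iff₀ (by nlinarith : (0:ℝ) < y^2)]; nlinarith
        linarith
      unfold alasso at h
      rw [this, mul_zero] at h
      linarith
    · have hav : alasso μ y = y - μ^2/y := by
        unfold alasso
        have h1 : μ^2/y^2 ≤ 1 := by
          rw [div_le_one (by nlinarith : (0:ℝ) < y^2)]; nlinarith
        rw [max_eq_left (by linarith)]
        field_simp; try ring
      rw [hav] at h
      have heq : y - μ^2/y = (y*y - μ^2)/y := by field_simp; try ring
      rw [heq, div_le_iff_of_neg hy0] at h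
      nlinarith [mul_pos (show 0 < -c by linarith) (show 0 < -y by linarith)]
  · intro h
    have hyμ : y < -μ := lt_of_le_of_lt h hcμ
    have hy0 : y < 0 := by linarith
    have hy' : y ≠ 0 := ne_of_lt hy0
    have hav : alasso μ y = y - μ^2/y := by
      unfold alasso
      have h1 : μ^2/y^2 ≤ 1 := by
        rw [div_le_one (by nlinarith : (0:ℝ) < y^2)]; nlinarith
      rw [max_eq_left (by linarith)]
      field_simp; try ring
    rw [hav]
    have heq : y - μ^2/y = (y*y - μ^2)/y := by field_simp; try ring
    rw [heq, div_le_iff_of_neg hy0]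
    nlinarith [mul_nonneg (sub_nonneg.mpr h) (show (0:ℝ) ≤ c*y + μ^2 by
      nlinarith [mul_pos (show 0 < -c by linarith) (show 0 < -y by linarith)])]

lemma gauss_Iic {n : ℕ} (hn : 1 ≤ n) (θ c : ℝ) :
    gaussianReal θ ((n : NNReal))⁻¹ (Set.Iic c)
      = gaussianReal 0 1 (Set.Iic (Real.sqrt n * (c - θ))) := by
  have hn0 : (0:ℝ) < n := by exact_mod_cast hn
  have hsq : (0:ℝ) < Real.sqrt n := Real.sqrt_pos.mpr hn0
  have hmap1 : (gaussianReal θ ((n : NNReal))⁻¹).map (· + (-θ))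
      = gaussianReal 0 ((n : NNReal))⁻¹ := by
    rw [gaussianReal_map_add_const]; simp
  have hmap2 : (gaussianReal 0 ((n : NNReal))⁻¹).map (Real.sqrt n * ·)
      = gaussianReal 0 1 := by
    rw [gaussianReal_map_const_mul]
    congr 1
    · ring
    · ext
      push_cast
      rw [Real.sq_sqrt hn0.le]
      field_simp
  have hmeas1 : Measurable (fun y : ℝ => y + (-θ)) := measurable_id.add_const _
  have hmeas2 : Measurable (fun y : ℝ => Real.sqrt n * y) := measurable_const_mul _
  have hcomp : (gaussianReal θ ((n : NNReal))⁻¹).map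
      (fun y => Real.sqrt n * (y + (-θ))) = gaussianReal 0 1 := by
    rw [show (fun y : ℝ => Real.sqrt n * (y + (-θ)))
        = (fun y : ℝ => Real.sqrt n * y) ∘ (fun y : ℝ => y + (-θ)) from rfl,
      ← Measure.map_map hmeas2 hmeas1, hmap1, hmap2]
  rw [← hcomp, Measure.map_apply (by exact hmeas2.comp hmeas1) measurableSet_Iic]
  congr 1
  ext y
  simp only [Set.mem_preimage, Set.mem_Iic, Function.comp]
  rw [mul_le_mul_iff_right₀ hsq]
  constructor <;> intro <;> linarith

lemma gcdf_eq {n : ℕ} {θ mu x c : ℝ} (hn : 1 ≤ n) (hμ : 0 < mu)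
    (hset : {y : ℝ | alasso mu y ≤ θ + mu * x} = Set.Iic c) :
    Gcdf n θ mu x = cdf (gaussianReal 0 1) (Real.sqrt n * (c - θ)) := by
  have hsets : {y : ℝ | mu⁻¹ * (alasso mu y - θ) ≤ x}
      = {y : ℝ | alasso mu y ≤ θ + mu * x} := by
    ext y
    simp only [Set.mem_setOf_eq]
    rw [inv_mul_le_iff₀ hμ]
    constructor <;> intro <;> linarith
  rw [Gcdf, hsets, hset, gauss_Iic hn, cdf_eq_real, measureReal_def]

lemma w_eq_pos (r m th x : ℝ) (hm : 0 < m) :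
    r * (((th + m*x) + Real.sqrt ((th + m*x)^2 + 4*m^2))/2 - th)
      = r * m * ((-(th/m) + x) + Real.sqrt ((th/m + x)^2 + 4))/2 := by
  have hm' : m ≠ 0 := ne_of_gt hm
  have hsq : Real.sqrt ((th + m*x)^2 + 4*m^2) = m * Real.sqrt ((th/m + x)^2 + 4) := by
    rw [show (th + m*x)^2 + 4*m^2 = m^2 * ((th/m + x)^2 + 4) by field_simp,
      Real.sqrt_mul (sq_nonneg m), Real.sqrt_sq hm.le]
  rw [hsq]
  field_simp
  ring

lemma w_eq_neg (r m th x : ℝ) (hm : 0 < m) :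
    r * (((th + m*x) - Real.sqrt ((th + m*x)^2 + 4*m^2))/2 - th)
      = r * m * ((-(th/m) + x) - Real.sqrt ((th/m + x)^2 + 4))/2 := by
  have hm' : m ≠ 0 := ne_of_gt hm
  have hsq : Real.sqrt ((th + m*x)^2 + 4*m^2) = m * Real.sqrt ((th/m + x)^2 + 4) := by
    rw [show (th + m*x)^2 + 4*m^2 = m^2 * ((th/m + x)^2 + 4) by field_simp,
      Real.sqrt_mul (sq_nonneg m), Real.sqrt_sq hm.le]
  rw [hsq]
  field_simp
  ring

lemma gcdf_mono {n : ℕ} {θ mu x x' : ℝ} (h : x ≤ x') :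
    Gcdf n θ mu x ≤ Gcdf n θ mu x' := by
  unfold Gcdf
  apply ENNReal.toReal_mono (measure_ne_top _ _)
  exact measure_mono (fun y hy => le_trans hy h)

end Aux

/-- consistent case with `θₙ/μₙ → ζ`, `1 ≤ ζ < ∞`:
`w⁽²⁾ₙ(x) → ∞` for `x > -1/ζ`, `w⁽²⁾ₙ(x) → -∞` for `x < -1/ζ`, and the cdf
`Gₙ` of `μₙ⁻¹(θ̂_A - θₙ)` converges weakly to pointmass at `-1/ζ`. -/
theorem stmt17 (μ θ : ℕ → ℝ) (ζ : ℝ) (hζ : 1 ≤ ζ) (hμpos : ∀ n, 0 < μ n)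
    (hμ0 : Tendsto μ atTop (nhds 0))
    (hμinf : Tendsto (fun n : ℕ => Real.sqrt n * μ n) atTop atTop)
    (hθζ : Tendsto (fun n : ℕ => θ n / μ n) atTop (nhds ζ)) :
    (∀ x : ℝ, -1 / ζ < x →
      Tendsto
        (fun n : ℕ => Real.sqrt n * μ n *
          ((-(θ n / μ n) + x) + Real.sqrt ((θ n / μ n + x) ^ 2 + 4)) / 2)
        atTop atTop) ∧
    (∀ x : ℝ, x < -1 / ζ →
      Tendsto
        (fun n : ℕ => Real.sqrt n * μ n *
          ((-(θ n / μ n) + x) + Real.sqrt ((θ n / μ n + x) ^ 2 + 4)) / 2)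
        atTop atBot) ∧
    ∀ x : ℝ, x ≠ -1 / ζ →
      Tendsto (fun n : ℕ => Gcdf n (θ n) (μ n) x) atTop
        (nhds (if -1 / ζ ≤ x then 1 else 0)) := by
  have hζ0 : (0:ℝ) < ζ := lt_of_lt_of_le zero_lt_one hζ
  -- limit of the second factor
  have hfac : ∀ x : ℝ, Tendsto
      (fun n : ℕ => (-(θ n / μ n) + x) + Real.sqrt ((θ n / μ n + x) ^ 2 + 4))
      atTop (nhds ((-ζ + x) + Real.sqrt ((ζ + x) ^ 2 + 4))) := by
    intro x
    exact (hθζ.neg.add_const x).add (((hθζ.add_const x).pow 2).add_const 4).sqrt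
  have hA : ∀ x : ℝ, -1 / ζ < x →
      Tendsto
        (fun n : ℕ => Real.sqrt n * μ n *
          ((-(θ n / μ n) + x) + Real.sqrt ((θ n / μ n + x) ^ 2 + 4)) / 2)
        atTop atTop := by
    intro x hx
    have hxζ : -1 < x * ζ := by
      have := (div_lt_iff₀ hζ0).mp hx
      linarith
    have hL : 0 < (-ζ + x) + Real.sqrt ((ζ + x) ^ 2 + 4) := by
      rcases le_or_gt (ζ - x) 0 with h | h
      · have h4 : (2:ℝ) ≤ Real.sqrt ((ζ + x) ^ 2 + 4) := by
          rw [show (2:ℝ) = Real.sqrt 4 by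
            rw [show (4:ℝ) = 2^2 by norm_num, Real.sqrt_sq (by norm_num : (0:ℝ) ≤ 2)]]
          exact Real.sqrt_le_sqrt (by nlinarith)
        linarith
      · have h2 : ζ - x < Real.sqrt ((ζ + x) ^ 2 + 4) := by
          rw [Real.lt_sqrt h.le]
          nlinarith
        linarith
    exact (hμinf.atTop_mul_pos hL (hfac x)).atTop_div_const two_pos
  have hB : ∀ x : ℝ, x < -1 / ζ →
      Tendsto
        (fun n : ℕ => Real.sqrt n * μ n *
          ((-(θ n / μ n) + x) + Real.sqrt ((θ n / μ n + x) ^ 2 + 4)) / 2)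
        atTop atBot := by
    intro x hx
    have hxζ : x * ζ < -1 := by
      have := (lt_div_iff₀ hζ0).mp hx
      linarith
    have hx0 : x < 0 := by nlinarith
    have hL : (-ζ + x) + Real.sqrt ((ζ + x) ^ 2 + 4) < 0 := by
      have h2 : Real.sqrt ((ζ + x) ^ 2 + 4) < ζ - x := by
        rw [Real.sqrt_lt' (by linarith)]
        nlinarith
      linarith
    exact (hμinf.atTop_mul_neg hL (hfac x)).atBot_div_const two_pos
  refine ⟨hA, hB, ?_⟩
  intro x hx
  rcases hx.lt_or_gt with hlt | hgt
  · -- x < -1/ζ : limit 0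
    rw [if_neg (not_le.mpr hlt)]
    have key0 : ∀ z : ℝ, z < -1 / ζ → -ζ < z →
        Tendsto (fun n => Gcdf n (θ n) (μ n) z) atTop (nhds 0) := by
      intro z hz hzζ
      have hζz : 0 < ζ + z := by linarith
      have hev : (fun n : ℕ => cdf (gaussianReal 0 1)
          (Real.sqrt n * μ n *
            ((-(θ n / μ n) + z) + Real.sqrt ((θ n / μ n + z) ^ 2 + 4)) / 2))
          =ᶠ[atTop] (fun n => Gcdf n (θ n) (μ n) z) := by
        filter_upwards [eventually_ge_atTop 1,
          (hθζ.add_const z).eventually (eventually_gt_nhds hζz)] with n hn hpos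
        have hμn := hμpos n
        have ht : 0 < θ n + μ n * z := by
          have h1 : μ n * (θ n / μ n + z) = θ n + μ n * z := by
            field_simp; try ring
          rw [← h1]
          exact mul_pos hμn hpos
        rw [gcdf_eq hn hμn (ray_pos hμn ht)]
        congr 1
        exact (w_eq_pos (Real.sqrt n) (μ n) (θ n) z hμn).symm
      exact Tendsto.congr' hev
        ((tendsto_cdf_atBot (gaussianReal 0 1)).comp (hB z hz))
    rcases lt_trichotomy x (-ζ) with hc | hc | hc
    · -- x < -ζ : threshold eventually negative
      have hζx : ζ + x < 0 := by linarith
      have hev : (fun n : ℕ => cdf (gaussianReal 0 1)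
          (Real.sqrt n * μ n *
            ((-(θ n / μ n) + x) - Real.sqrt ((θ n / μ n + x) ^ 2 + 4)) / 2))
          =ᶠ[atTop] (fun n => Gcdf n (θ n) (μ n) x) := by
        filter_upwards [eventually_ge_atTop 1,
          (hθζ.add_const x).eventually (eventually_lt_nhds hζx)] with n hn hneg
        have hμn := hμpos n
        have ht : θ n + μ n * x < 0 := by
          have h1 : μ n * (θ n / μ n + x) = θ n + μ n * x := by
            field_simp; try ring
          rw [← h1]
          exact mul_neg_of_pos_of_neg hμn hneg
        rw [gcdf_eq hn hμn (ray_neg hμn ht)]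
        congr 1
        exact (w_eq_neg (Real.sqrt n) (μ n) (θ n) x hμn).symm
      have hfac' : Tendsto
          (fun n : ℕ => (-(θ n / μ n) + x) - Real.sqrt ((θ n / μ n + x) ^ 2 + 4))
          atTop (nhds ((-ζ + x) - Real.sqrt ((ζ + x) ^ 2 + 4))) :=
        (hθζ.neg.add_const x).sub (((hθζ.add_const x).pow 2).add_const 4).sqrt
      have hL : (-ζ + x) - Real.sqrt ((ζ + x) ^ 2 + 4) < 0 := by
        have := Real.sqrt_nonneg ((ζ + x) ^ 2 + 4)
        nlinarith
      exact Tendsto.congr' hev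
        ((tendsto_cdf_atBot (gaussianReal 0 1)).comp
          ((hμinf.atTop_mul_neg hL hfac').atBot_div_const two_pos))
    · -- x = -ζ : squeeze between 0 and Gcdf at x'
      rw [hc] at hlt
      have hζ1 : 1 < ζ * ζ := by
        have := (lt_div_iff₀ hζ0).mp hlt
        nlinarith
      set x' := (-ζ + -1 / ζ) / 2 with hx'
      have hx'1 : x' < -1 / ζ := by rw [hx']; linarith
      have hx'2 : -ζ < x' := by rw [hx']; linarith
      have hx'x : x ≤ x' := by rw [hc]; linarith
      exact tendsto_of_tendsto_of_tendsto_of_le_of_le tendsto_const_nhds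
        (key0 x' hx'1 hx'2) (fun n => ENNReal.toReal_nonneg)
        (fun n => gcdf_mono hx'x)
    · exact key0 x hlt hc
  · -- -1/ζ < x : limit 1
    rw [if_pos hgt.le]
    have hxζ : -1 < x * ζ := by
      have := (div_lt_iff₀ hζ0).mp hgt
      linarith
    have hζx : 0 < ζ + x := by nlinarith
    have hev : (fun n : ℕ => cdf (gaussianReal 0 1)
        (Real.sqrt n * μ n *
          ((-(θ n / μ n) + x) + Real.sqrt ((θ n / μ n + x) ^ 2 + 4)) / 2))
        =ᶠ[atTop] (fun n => Gcdf n (θ n) (μ n) x) := by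
      filter_upwards [eventually_ge_atTop 1,
        (hθζ.add_const x).eventually (eventually_gt_nhds hζx)] with n hn hpos
      have hμn := hμpos n
      have ht : 0 < θ n + μ n * x := by
        have h1 : μ n * (θ n / μ n + x) = θ n + μ n * x := by
          field_simp; try ring
        rw [← h1]
        exact mul_pos hμn hpos
      rw [gcdf_eq hn hμn (ray_pos hμn ht)]
      congr 1
      exact (w_eq_pos (Real.sqrt n) (μ n) (θ n) x hμn).symm
    exact Tendsto.congr' hev
      ((tendsto_cdf_atTop (gaussianReal 0 1)).comp (hA x hgt))
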